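/- arXiv:1704.03208 — 6 statements merged into one kernel-verified Lean document; each statement's English description precedes it below -/
import Mathlib

section
/- Let A be a Banach algebra with unit and let Q : ℝ × ℝ → A be smooth with Q(x,t) invertible for all (x,t). If Q satisfies the meta-mKdV equation Q_t = Q_xxx - 3 Q_xx Q⁻¹ Q_x, then V := Q_x Q⁻¹ satisfies the noncommutative mKdV equation V_t = V_xxx - 3 (V² V_x + V_x V²). -/
variable {A : Type*} [NormedRing A] [NormedAlgebra ℝ A] [CompleteSpace A]

/-- partial derivative in the first (space) variable -/
noncomputable def px (Q : ℝ × ℝ → A) : ℝ × ℝ → A := fun p => deriv (fun x => Q (x, p.2)) p.1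

/-- partial derivative in the second (time) variable -/
noncomputable def pt (Q : ℝ × ℝ → A) : ℝ × ℝ → A := fun p => deriv (fun t => Q (p.1, t)) p.2

section helpers

variable {f g f' g' : ℝ × ℝ → A}

/-- `f'` is the x-partial-derivative of `f` (as a `HasDerivAt` statement). -/
def HX (f f' : ℝ × ℝ → A) : Prop := ∀ p : ℝ × ℝ, HasDerivAt (fun x => f (x, p.2)) (f' p) p.1

/-- `f'` is the t-partial-derivative of `f`. -/
def HT (f f' : ℝ × ℝ → A) : Prop := ∀ p : ℝ × ℝ, HasDerivAt (fun t => f (p.1, t)) (f' p) p.2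

theorem HX.px_eq (h : HX f f') : px f = f' := funext fun p => (h p).deriv

theorem HT.pt_eq (h : HT f f') : pt f = f' := funext fun p => (h p).deriv

theorem HX.mul (hf : HX f f') (hg : HX g g') :
    HX (fun q => f q * g q) (fun p => f' p * g p + f p * g' p) := fun p => (hf p).mul (hg p)

theorem HX.add (hf : HX f f') (hg : HX g g') :
    HX (fun q => f q + g q) (fun p => f' p + g' p) := fun p => (hf p).add (hg p)

theorem HX.sub (hf : HX f f') (hg : HX g g') :
    HX (fun q => f q - g q) (fun p => f' p - g' p) := fun p => (hf p).sub (hg p)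

theorem HX.neg (hf : HX f f') : HX (fun q => -f q) (fun p => -f' p) := fun p => (hf p).neg

theorem HX.const_mul (hf : HX f f') (c : A) :
    HX (fun q => c * f q) (fun p => c * f' p) := fun p => (hf p).const_mul c

theorem HT.mul (hf : HT f f') (hg : HT g g') :
    HT (fun q => f q * g q) (fun p => f' p * g p + f p * g' p) := fun p => (hf p).mul (hg p)

theorem hx_fderiv (hf : Differentiable ℝ f) :
    HX f (fun p => fderiv ℝ f p (1, 0)) := fun p =>
  (hf p).hasFDerivAt.comp_hasDerivAt p.1 ((hasDerivAt_id p.1).prodMk (hasDerivAt_const p.1 p.2))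

theorem ht_fderiv (hf : Differentiable ℝ f) :
    HT f (fun p => fderiv ℝ f p (0, 1)) := fun p =>
  (hf p).hasFDerivAt.comp_hasDerivAt p.2 ((hasDerivAt_const p.2 p.1).prodMk (hasDerivAt_id p.2))

theorem hx_smooth (hf : ContDiff ℝ (⊤ : ℕ∞) f) : HX f (px f) := by
  have h := hx_fderiv (hf.differentiable (by simp))
  rwa [← h.px_eq] at h

theorem ht_smooth (hf : ContDiff ℝ (⊤ : ℕ∞) f) : HT f (pt f) := by
  have h := ht_fderiv (hf.differentiable (by simp))
  rwa [← h.pt_eq] at h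

theorem px_contDiff (hf : ContDiff ℝ (⊤ : ℕ∞) f) : ContDiff ℝ (⊤ : ℕ∞) (px f) := by
  rw [(hx_fderiv (hf.differentiable (by simp))).px_eq]
  exact (hf.fderiv_right (by simp)).clm_apply contDiff_const

theorem hx_inv {Q : ℝ × ℝ → A} (hQ : ContDiff ℝ (⊤ : ℕ∞) Q) (hinv : ∀ p : ℝ × ℝ, IsUnit (Q p)) :
    HX (fun q => Ring.inverse (Q q))
      (fun p => -(Ring.inverse (Q p) * px Q p * Ring.inverse (Q p))) := fun p => by
  obtain ⟨u, hu⟩ := hinv p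
  have h1 : HasDerivAt (fun x => Q (x, p.2)) (px Q p) p.1 := hx_smooth hQ p
  have h2 : HasFDerivAt Ring.inverse
      (-(ContinuousLinearMap.mulLeftRight ℝ A ↑u⁻¹ ↑u⁻¹)) (Q p) := by
    rw [← hu]; exact hasFDerivAt_ringInverse u
  have h3 := h2.comp_hasDerivAt p.1 h1
  have hui : (↑u⁻¹ : A) = Ring.inverse (Q p) := by rw [← hu, Ring.inverse_unit]
  simpa [hui, Function.comp_def] using h3

theorem ht_inv {Q : ℝ × ℝ → A} (hQ : ContDiff ℝ (⊤ : ℕ∞) Q) (hinv : ∀ p : ℝ × ℝ, IsUnit (Q p)) :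
    HT (fun q => Ring.inverse (Q q))
      (fun p => -(Ring.inverse (Q p) * pt Q p * Ring.inverse (Q p))) := fun p => by
  obtain ⟨u, hu⟩ := hinv p
  have h1 : HasDerivAt (fun t => Q (p.1, t)) (pt Q p) p.2 := ht_smooth hQ p
  have h2 : HasFDerivAt Ring.inverse
      (-(ContinuousLinearMap.mulLeftRight ℝ A ↑u⁻¹ ↑u⁻¹)) (Q p) := by
    rw [← hu]; exact hasFDerivAt_ringInverse u
  have h3 := h2.comp_hasDerivAt p.2 h1
  have hui : (↑u⁻¹ : A) = Ring.inverse (Q p) := by rw [← hu, Ring.inverse_unit]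
  simpa [hui, Function.comp_def] using h3

/-- Mixed partial derivatives commute for smooth functions. -/
theorem pt_px (hf : ContDiff ℝ (⊤ : ℕ∞) f) (p : ℝ × ℝ) : pt (px f) p = px (pt f) p := by
  have hd : Differentiable ℝ f := hf.differentiable (by simp)
  have hd1 : Differentiable ℝ (fderiv ℝ f) := (hf.fderiv_right (m := (⊤ : ℕ∞)) (by simp)).differentiable (by simp)
  have hsym := second_derivative_symmetric (f := f) (f' := fderiv ℝ f)
      (f'' := fderiv ℝ (fderiv ℝ f) p) (fun y => (hd y).hasFDerivAt) (hd1 p).hasFDerivAt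
  have e1 : px f = fun q => fderiv ℝ f q (1, 0) := (hx_fderiv hd).px_eq
  have e2 : pt f = fun q => fderiv ℝ f q (0, 1) := (ht_fderiv hd).pt_eq
  have c1 : ∀ v : ℝ × ℝ, HasFDerivAt (fun q => fderiv ℝ f q v)
      ((ContinuousLinearMap.apply ℝ A v).comp (fderiv ℝ (fderiv ℝ f) p)) p := fun v =>
    (ContinuousLinearMap.apply ℝ A v).hasFDerivAt.comp p (hd1 p).hasFDerivAt
  have hpx : Differentiable ℝ (px f) := (px_contDiff hf).differentiable (by simp)
  have hpt : Differentiable ℝ (pt f) := by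
    rw [e2]; exact hd1.clm_apply (differentiable_const _)
  have k1 : pt (px f) p = fderiv ℝ (fderiv ℝ f) p (0, 1) (1, 0) := by
    have := congrFun (ht_fderiv hpx).pt_eq p
    rw [this]
    show fderiv ℝ (px f) p (0, 1) = _
    rw [e1, (c1 (1, 0)).fderiv]
    rfl
  have k2 : px (pt f) p = fderiv ℝ (fderiv ℝ f) p (1, 0) (0, 1) := by
    have := congrFun (hx_fderiv hpt).px_eq p
    rw [this]
    show fderiv ℝ (pt f) p (1, 0) = _
    rw [e2, (c1 (0, 1)).fderiv]
    rfl
  rw [k1, k2, hsym]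

end helpers

theorem stmt_0 (Q : ℝ × ℝ → A) (hQ : ContDiff ℝ (⊤ : ℕ∞) Q)
    (hinv : ∀ p : ℝ × ℝ, IsUnit (Q p))
    (heq : ∀ p : ℝ × ℝ, pt (Q) p = px (px (px (Q))) p - 3 * (px (px (Q)) p * Ring.inverse ((Q) p) * px (Q) p)) :
    ∀ p : ℝ × ℝ, pt (fun q => px Q q * Ring.inverse (Q q)) p = px (px (px (fun q => px Q q * Ring.inverse (Q q)))) p - 3 * ((fun q => px Q q * Ring.inverse (Q q)) p * (fun q => px Q q * Ring.inverse (Q q)) p * px (fun q => px Q q * Ring.inverse (Q q)) p + px (fun q => px Q q * Ring.inverse (Q q)) p * ((fun q => px Q q * Ring.inverse (Q q)) p * (fun q => px Q q * Ring.inverse (Q q)) p)) := by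
  have hd1 : ContDiff ℝ (⊤ : ℕ∞) (px Q) := px_contDiff hQ
  have hd2 : ContDiff ℝ (⊤ : ℕ∞) (px (px Q)) := px_contDiff hd1
  have hd3 : ContDiff ℝ (⊤ : ℕ∞) (px (px (px Q))) := px_contDiff hd2
  have X1 : HX (px Q) (px (px Q)) := hx_smooth hd1
  have X2 : HX (px (px Q)) (px (px (px Q))) := hx_smooth hd2
  have X3 : HX (px (px (px Q))) (px (px (px (px Q)))) := hx_smooth hd3
  have XR := hx_inv hQ hinv
  have T1 : HT (px Q) (pt (px Q)) := ht_smooth hd1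
  have TR := ht_inv hQ hinv
  have et : pt (fun q => px Q q * Ring.inverse (Q q)) = fun p =>
      pt (px Q) p * Ring.inverse (Q p) +
        px Q p * -(Ring.inverse (Q p) * pt Q p * Ring.inverse (Q p)) := HT.pt_eq (T1.mul TR)
  have e1 : px (fun q => px Q q * Ring.inverse (Q q)) = fun p => ((px (px Q) p * Ring.inverse (Q p)) + (px Q p * (-((Ring.inverse (Q p) * px Q p) * Ring.inverse (Q p))))) := HX.px_eq (X1.mul XR)
  have e2 : px (fun p => ((px (px Q) p * Ring.inverse (Q p)) + (px Q p * (-((Ring.inverse (Q p) * px Q p) * Ring.inverse (Q p)))))) = fun p => (((px (px (px Q)) p * Ring.inverse (Q p)) + (px (px Q) p * (-((Ring.inverse (Q p) * px Q p) * Ring.inverse (Q p))))) + ((px (px Q) p * (-((Ring.inverse (Q p) * px Q p) * Ring.inverse (Q p)))) + (px Q p * (-(((((-((Ring.inverse (Q p) * px Q p) * Ring.inverse (Q p))) * px Q p) + (Ring.inverse (Q p) * px (px Q) p)) * Ring.inverse (Q p)) + ((Ring.inverse (Q p) * px Q p) * (-((Ring.inverse (Q p) * px Q p) * Ring.inverse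 (Q p))))))))) := HX.px_eq ((X2.mul XR).add (X1.mul (((XR.mul X1).mul XR).neg)))
  have e3 : px (fun p => (((px (px (px Q)) p * Ring.inverse (Q p)) + (px (px Q) p * (-((Ring.inverse (Q p) * px Q p) * Ring.inverse (Q p))))) + ((px (px Q) p * (-((Ring.inverse (Q p) * px Q p) * Ring.inverse (Q p)))) + (px Q p * (-(((((-((Ring.inverse (Q p) * px Q p) * Ring.inverse (Q p))) * px Q p) + (Ring.inverse (Q p) * px (px Q) p)) * Ring.inverse (Q p)) + ((Ring.inverse (Q p) * px Q p) * (-((Ring.inverse (Q p) * px Q p) * Ring.inverse (Q p)))))))))) = fun p => ((((px (px (px (px Q))) p * Ring.inverse (Q p)) + (px (px (px Q)) p * (-((Ring.inverse (Q p) * px Q p) * Ring.inverse (Q p))))) + ((px (px (px Q)) p * (-((Ring.inverse (Q p) * px Q p) * Ring.inverse (Q p)))) + (px (px Q) p * (-(((((-((Ring.inverse (Q p) * px Q p) * Ring.inverse (Q p))) * px Q p) + (Ring.inverse (Q p) * px (px Q) p)) * Ring.inverse (Q p)) + ((Ring.inverse (Q p) * px Q p) * (-((Ring.inverse (Q p)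 * px Q p) * Ring.inverse (Q p))))))))) + (((px (px (px Q)) p * (-((Ring.inverse (Q p) * px Q p) * Ring.inverse (Q p)))) + (px (px Q) p * (-(((((-((Ring.inverse (Q p) * px Q p) * Ring.inverse (Q p))) * px Q p) + (Ring.inverse (Q p) * px (px Q) p)) * Ring.inverse (Q p)) + ((Ring.inverse (Q p) * px Q p) * (-((Ring.inverse (Q p) * px Q p) * Ring.inverse (Q p)))))))) + ((px (px Q) p * (-(((((-((Ring.inverse (Q p) * px Q p) * Ring.inverse (Q p))) * px Q p) + (Ring.inverse (Q p) * px (px Q) p)) * Ring.inverse (Q p)) + ((Ring.inverse (Q p) * px Q p) * (-((Ring.inverse (Q p) * px Q p) * Ring.inverse (Q p))))))) + (px Q p * (-(((((((-(((((-((Ring.inverse (Q p) * px Q p) * Ring.inverse (Q p))) * px Q p) + (Ring.inverse (Q p) * px (px Q) p)) * Ring.inverse (Q p)) + ((Ring.inverse (Q p) * px Q p) * (-((Ring.inverse (Q p) * px Q p) * Ring.inverse (Q p)))))) * px Q p) + ((-((Ring.inverse (Q p) * px Q p) * Ring.inverse (Q p))) * px (px Q) p)) + (((-((Ring.inverse (Q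 p) * px Q p) * Ring.inverse (Q p))) * px (px Q) p) + (Ring.inverse (Q p) * px (px (px Q)) p))) * Ring.inverse (Q p)) + ((((-((Ring.inverse (Q p) * px Q p) * Ring.inverse (Q p))) * px Q p) + (Ring.inverse (Q p) * px (px Q) p)) * (-((Ring.inverse (Q p) * px Q p) * Ring.inverse (Q p))))) + (((((-((Ring.inverse (Q p) * px Q p) * Ring.inverse (Q p))) * px Q p) + (Ring.inverse (Q p) * px (px Q) p)) * (-((Ring.inverse (Q p) * px Q p) * Ring.inverse (Q p)))) + ((Ring.inverse (Q p) * px Q p) * (-(((((-((Ring.inverse (Q p) * px Q p) * Ring.inverse (Q p))) * px Q p) + (Ring.inverse (Q p) * px (px Q) p)) * Ring.inverse (Q p)) + ((Ring.inverse (Q p) * px Q p) * (-((Ring.inverse (Q p) * px Q p) * Ring.inverse (Q p)))))))))))))) := HX.px_eq (((X3.mul XR).add (X2.mul (((XR.mul X1).mul XR).neg))).add ((X2.mul (((XR.mul X1).mul XR).neg)).add (X1.mul ((((((((XR.mul X1).mul XR).neg).mul X1).add (XR.mul X2)).mul XR).add ((XR.mul X1).mul (((XR.mul X1).mul XR).n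eg))).neg))))
  have hq : pt Q = fun q => (px (px (px Q)) q - (3 * ((px (px Q) q * Ring.inverse (Q q)) * px Q q))) := funext heq
  have e4 : px (fun q => (px (px (px Q)) q - (3 * ((px (px Q) q * Ring.inverse (Q q)) * px Q q)))) = fun p => (px (px (px (px Q))) p - (3 * ((((px (px (px Q)) p * Ring.inverse (Q p)) + (px (px Q) p * (-((Ring.inverse (Q p) * px Q p) * Ring.inverse (Q p))))) * px Q p) + ((px (px Q) p * Ring.inverse (Q p)) * px (px Q) p)))) := HX.px_eq (X3.sub (((X2.mul XR).mul X1).const_mul 3))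
  intro p
  simp only [et, e1, e2, e3]
  rw [pt_px hQ p]
  simp only [hq, e4]
  generalize px (px (px (px Q))) p = q4
  generalize px (px (px Q)) p = q3
  generalize px (px Q) p = q2
  generalize px Q p = q1
  generalize Ring.inverse (Q p) = r
  noncomm_ring
end

section
/- Let A be a Banach algebra with unit and let Q : ℝ × ℝ → A be smooth with Q(x,t) invertible for all (x,t). If Q satisfies the meta-mKdV equation Q_t = Q_xxx - 3 Q_xx Q⁻¹ Q_x, then Ṽ := Q⁻¹ Q_x satisfies the alternative noncommutative mKdV equation Ṽ_t = Ṽ_xxx + 3 (Ṽ Ṽ_xx - Ṽ_xx Ṽ) - 6 Ṽ Ṽ_x Ṽ. -/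
open scoped ContDiff

section helpers
variable {F : Type*} [NormedAddCommGroup F] [NormedSpace ℝ F]

theorem hasDerivAt_sect_x (f : ℝ × ℝ → F) (p : ℝ × ℝ) (hf : DifferentiableAt ℝ f p) :
    HasDerivAt (fun x => f (x, p.2)) (fderiv ℝ f p (1, 0)) p.1 := by
  have h1 : HasDerivAt (fun x : ℝ => (x, p.2)) ((1 : ℝ), (0 : ℝ)) p.1 :=
    (hasDerivAt_id p.1).prodMk (hasDerivAt_const p.1 p.2)
  have h2 : HasFDerivAt f (fderiv ℝ f p) ((fun x : ℝ => (x, p.2)) p.1) := by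
    simpa using hf.hasFDerivAt
  simpa [Function.comp_def] using h2.comp_hasDerivAt p.1 h1

theorem hasDerivAt_sect_t (f : ℝ × ℝ → F) (p : ℝ × ℝ) (hf : DifferentiableAt ℝ f p) :
    HasDerivAt (fun t => f (p.1, t)) (fderiv ℝ f p (0, 1)) p.2 := by
  have h1 : HasDerivAt (fun t : ℝ => (p.1, t)) ((0 : ℝ), (1 : ℝ)) p.2 :=
    (hasDerivAt_const p.2 p.1).prodMk (hasDerivAt_id p.2)
  have h2 : HasFDerivAt f (fderiv ℝ f p) ((fun t : ℝ => (p.1, t)) p.2) := by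
    simpa using hf.hasFDerivAt
  simpa [Function.comp_def] using h2.comp_hasDerivAt p.2 h1

end helpers

variable {A : Type*} [NormedRing A] [NormedAlgebra ℝ A] [CompleteSpace A]

theorem px_contDiff_s1 (Q : ℝ × ℝ → A) (hQ : ContDiff ℝ ∞ Q) : ContDiff ℝ ∞ (px Q) := by
  have hpx : px Q = fun q => fderiv ℝ Q q (1, 0) :=
    funext fun q => (hasDerivAt_sect_x Q q (hQ.differentiable (by simp) q)).deriv
  rw [hpx]
  exact (hQ.fderiv_right (le_refl _)).clm_apply contDiff_const

theorem clairaut (Q : ℝ × ℝ → A) (hQ : ContDiff ℝ ∞ Q) (p : ℝ × ℝ) :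
    pt (px Q) p = px (pt Q) p := by
  have hone : (∞ : WithTop ℕ∞) ≠ 0 := by simp
  have hd : Differentiable ℝ Q := hQ.differentiable hone
  have hF : ContDiff ℝ ∞ (fderiv ℝ Q) := hQ.fderiv_right (le_refl _)
  have hFd : Differentiable ℝ (fderiv ℝ Q) := hF.differentiable hone
  have hpx : px Q = fun q => fderiv ℝ Q q (1, 0) :=
    funext fun q => (hasDerivAt_sect_x Q q (hd q)).deriv
  have hpt : pt Q = fun q => fderiv ℝ Q q (0, 1) :=
    funext fun q => (hasDerivAt_sect_t Q q (hd q)).deriv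
  have h1 : HasDerivAt (fun t => fderiv ℝ Q (p.1, t)) (fderiv ℝ (fderiv ℝ Q) p (0, 1)) p.2 :=
    hasDerivAt_sect_t (fderiv ℝ Q) p (hFd p)
  have h2 : HasDerivAt (fun x => fderiv ℝ Q (x, p.2)) (fderiv ℝ (fderiv ℝ Q) p (1, 0)) p.1 :=
    hasDerivAt_sect_x (fderiv ℝ Q) p (hFd p)
  have h1' := h1.clm_apply (hasDerivAt_const p.2 ((1 : ℝ), (0 : ℝ)))
  have h2' := h2.clm_apply (hasDerivAt_const p.1 ((0 : ℝ), (1 : ℝ)))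
  have hsym : fderiv ℝ (fderiv ℝ Q) p (0, 1) (1, 0) = fderiv ℝ (fderiv ℝ Q) p (1, 0) (0, 1) :=
    (hQ.contDiffAt.isSymmSndFDerivAt (by simp [minSmoothness_of_isRCLikeNormedField]; norm_cast)) _ _
  calc pt (px Q) p = deriv (fun t => fderiv ℝ Q (p.1, t) (1, 0)) p.2 := by rw [hpx]; rfl
    _ = fderiv ℝ (fderiv ℝ Q) p (0, 1) (1, 0) + fderiv ℝ Q (p.1, p.2) 0 := h1'.deriv
    _ = fderiv ℝ (fderiv ℝ Q) p (1, 0) (0, 1) := by rw [map_zero, add_zero, hsym]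
    _ = fderiv ℝ (fderiv ℝ Q) p (1, 0) (0, 1) + fderiv ℝ Q (p.1, p.2) 0 := by
          rw [map_zero, add_zero]
    _ = deriv (fun x => fderiv ℝ Q (x, p.2) (0, 1)) p.1 := h2'.deriv.symm
    _ = px (pt Q) p := by rw [hpt]; rfl

theorem xside (g : ℝ → A) (hg : ContDiff ℝ ∞ g) (hu : ∀ x, IsUnit (g x)) (a : ℝ) :
    -(Ring.inverse (g a) * (deriv (deriv (deriv g)) a - 3 * (deriv (deriv g) a * Ring.inverse (g a) * deriv g a)) * Ring.inverse (g a)) * deriv g a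
      + Ring.inverse (g a) * deriv (fun x => deriv (deriv (deriv g)) x - 3 * (deriv (deriv g) x * Ring.inverse (g x) * deriv g x)) a
    = deriv (deriv (deriv (fun x => Ring.inverse (g x) * deriv g x))) a
      + 3 * (Ring.inverse (g a) * deriv g a * deriv (deriv (fun x => Ring.inverse (g x) * deriv g x)) a
           - deriv (deriv (fun x => Ring.inverse (g x) * deriv g x)) a * (Ring.inverse (g a) * deriv g a))
      - 6 * (Ring.inverse (g a) * deriv g a * deriv (fun x => Ring.inverse (g x) * deriv g x) a * (Ring.inverse (g a) * deriv g a)) := by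
  have hone : (∞ : WithTop ℕ∞) ≠ 0 := by simp
  have hg1 : ContDiff ℝ ∞ (deriv g) := (contDiff_infty_iff_deriv.mp hg).2
  have hg2 : ContDiff ℝ ∞ (deriv (deriv g)) := (contDiff_infty_iff_deriv.mp hg1).2
  have hg3 : ContDiff ℝ ∞ (deriv (deriv (deriv g))) := (contDiff_infty_iff_deriv.mp hg2).2
  have h0 : ∀ x, HasDerivAt g (deriv g x) x := fun x => (hg.differentiable hone x).hasDerivAt
  have h1 : ∀ x, HasDerivAt (deriv g) (deriv (deriv g) x) x :=
    fun x => (hg1.differentiable hone x).hasDerivAt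
  have h2 : ∀ x, HasDerivAt (deriv (deriv g)) (deriv (deriv (deriv g)) x) x :=
    fun x => (hg2.differentiable hone x).hasDerivAt
  have h3 : ∀ x, HasDerivAt (deriv (deriv (deriv g))) (deriv (deriv (deriv (deriv g))) x) x :=
    fun x => (hg3.differentiable hone x).hasDerivAt
  have hr : ∀ x, HasDerivAt (fun y => Ring.inverse (g y))
      (-(Ring.inverse (g x) * deriv g x * Ring.inverse (g x))) x := by
    intro x
    obtain ⟨u, hux⟩ := hu x
    have hF : HasFDerivAt Ring.inverse
        (-(ContinuousLinearMap.mulLeftRight ℝ A ↑u⁻¹) ↑u⁻¹) (g x) := by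
      rw [← hux]; exact hasFDerivAt_ringInverse u
    have hc : (↑u⁻¹ : A) = Ring.inverse (g x) := by
      rw [← hux, Ring.inverse_unit]
    have := hF.comp_hasDerivAt x (h0 x)
    simpa [Function.comp_def, hc] using this
  have dv : deriv (fun x => Ring.inverse (g x) * deriv g x)
      = fun x => -(Ring.inverse (g x) * deriv g x * Ring.inverse (g x)) * deriv g x + Ring.inverse (g x) * deriv (deriv g) x :=
    funext fun x => ((hr x).mul (h1 x)).deriv
  have ddv : (deriv (fun x => -(Ring.inverse (g x) * deriv g x * Ring.inverse (g x)) * deriv g x + Ring.inverse (g x) * deriv (deriv g) x))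
      = fun x => -((-(Ring.inverse (g x) * deriv g x * Ring.inverse (g x)) * deriv g x + Ring.inverse (g x) * deriv (deriv g) x) * Ring.inverse (g x) + Ring.inverse (g x) * deriv g x * -(Ring.inverse (g x) * deriv g x * Ring.inverse (g x))) * deriv g x + -(Ring.inverse (g x) * deriv g x * Ring.inverse (g x)) * deriv (deriv g) x + (-(Ring.inverse (g x) * deriv g x * Ring.inverse (g x)) * deriv (deriv g) x + Ring.inverse (g x) * deriv (deriv (deriv g)) x) :=
    funext fun x =>
      (((((hr x).mul (h1 x)).mul (hr x)).neg.mul (h1 x)).add ((hr x).mul (h2 x))).deriv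
  have E3 := ((((((((hr a).mul (h1 a)).mul (hr a)).neg.mul (h1 a)).add
      ((hr a).mul (h2 a))).mul (hr a)).add
      (((hr a).mul (h1 a)).mul ((((hr a).mul (h1 a)).mul (hr a)).neg))).neg.mul (h1 a)).add
      (((((hr a).mul (h1 a)).mul (hr a)).neg.mul (h2 a))) |>.add
      (((((hr a).mul (h1 a)).mul (hr a)).neg.mul (h2 a)).add ((hr a).mul (h3 a))) |>.deriv
  have EH := ((h3 a).sub (HasDerivAt.const_mul (3 : A)
      (((h2 a).mul (hr a)).mul (h1 a)))).deriv
  simp only [dv, ddv]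
  simp only [Pi.mul_def, Pi.add_def, Pi.neg_def, Pi.sub_def] at E3 EH
  rw [E3, EH]
  noncomm_ring

theorem stmt_1 (Q : ℝ × ℝ → A) (hQ : ContDiff ℝ (⊤ : ℕ∞) Q)
    (hinv : ∀ p : ℝ × ℝ, IsUnit (Q p))
    (heq : ∀ p : ℝ × ℝ, pt (Q) p = px (px (px (Q))) p - 3 * (px (px (Q)) p * Ring.inverse ((Q) p) * px (Q) p)) :
    ∀ p : ℝ × ℝ, pt (fun q => Ring.inverse (Q q) * px Q q) p = px (px (px (fun q => Ring.inverse (Q q) * px Q q))) p + 3 * ((fun q => Ring.inverse (Q q) * px Q q) p * px (px (fun q => Ring.inverse (Q q) * px Q q)) p - px (px (fun q => Ring.inverse (Q q) * px Q q)) p * (fun q => Ring.inverse (Q q) * px Q q) p) - 6 * ((fun q => Ring.inverse (Q q) * px Q q) p * px (fun q => Ring.inverse (Q q) * px Q q) p * (fun q => Ring.inverse (Q q) * px Q q) p) := by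

  have hQ' : ContDiff ℝ ∞ Q := hQ.of_le (by simp)
  have hone : (∞ : WithTop ℕ∞) ≠ 0 := by simp
  rintro ⟨a, b⟩
  have hGc : ContDiff ℝ ∞ (fun x => Q (x, b)) := hQ'.comp (contDiff_id.prodMk contDiff_const)
  have hWd : DifferentiableAt ℝ (fun t => Q (a, t)) b :=
    ((hQ'.comp (contDiff_const.prodMk contDiff_id)).differentiable hone) b
  have hW : HasDerivAt (fun t => Q (a, t)) (pt Q (a, b)) b := hWd.hasDerivAt
  have hRW : HasDerivAt (fun t => Ring.inverse (Q (a, t)))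
      (-(Ring.inverse (Q (a, b)) * pt Q (a, b) * Ring.inverse (Q (a, b)))) b := by
    obtain ⟨u, hux⟩ := hinv (a, b)
    have hF : HasFDerivAt Ring.inverse
        (-(ContinuousLinearMap.mulLeftRight ℝ A ↑u⁻¹) ↑u⁻¹) (Q (a, b)) := by
      rw [← hux]; exact hasFDerivAt_ringInverse u
    have hc : (↑u⁻¹ : A) = Ring.inverse (Q (a, b)) := by
      rw [← hux, Ring.inverse_unit]
    have := hF.comp_hasDerivAt b hW
    simpa [Function.comp_def, hc] using this
  have hPXd : DifferentiableAt ℝ (fun t => px Q (a, t)) b :=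
    (((px_contDiff_s1 Q hQ').comp (contDiff_const.prodMk contDiff_id)).differentiable hone) b
  have hPX : HasDerivAt (fun t => px Q (a, t)) (pt (px Q) (a, b)) b := hPXd.hasDerivAt
  have hLHS : pt (fun q => Ring.inverse (Q q) * px Q q) (a, b)
      = -(Ring.inverse (Q (a, b)) * pt Q (a, b) * Ring.inverse (Q (a, b))) * px Q (a, b)
        + Ring.inverse (Q (a, b)) * pt (px Q) (a, b) := (hRW.mul hPX).deriv
  have hsect : (fun x => pt Q (x, b)) = (fun x => deriv (deriv (deriv (fun y => Q (y, b)))) x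
      - 3 * (deriv (deriv (fun y => Q (y, b))) x * Ring.inverse (Q (x, b)) * deriv (fun y => Q (y, b)) x)) :=
    funext fun x => heq (x, b)
  have hptx : px (pt Q) (a, b) = deriv (fun x => deriv (deriv (deriv (fun y => Q (y, b)))) x
      - 3 * (deriv (deriv (fun y => Q (y, b))) x * Ring.inverse (Q (x, b)) * deriv (fun y => Q (y, b)) x)) a :=
    calc px (pt Q) (a, b) = deriv (fun x => pt Q (x, b)) a := rfl
      _ = _ := by rw [hsect]
  have hQt : pt Q (a, b) = deriv (deriv (deriv (fun y => Q (y, b)))) a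
      - 3 * (deriv (deriv (fun y => Q (y, b))) a * Ring.inverse (Q (a, b)) * deriv (fun y => Q (y, b)) a) :=
    heq (a, b)
  rw [hLHS, clairaut Q hQ' (a, b), hptx, hQt]
  exact xside (fun y => Q (y, b)) hGc (fun x => hinv (x, b)) a
end

section
/- Let A be a unital Banach algebra and Q : ℝ × ℝ → A smooth and pointwise invertible. Then Q satisfies the meta-mKdV equation Q_t = Q_xxx - 3 Q_xx Q⁻¹ Q_x if and only if Q̃ := Q⁻¹ satisfies the mirror meta-mKdV equation Q̃_t = Q̃_xxx - 3 Q̃_x Q̃⁻¹ Q̃_xx. -/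
set_option linter.unusedSectionVars false

variable {A : Type*} [NormedRing A] [NormedAlgebra ℝ A] [CompleteSpace A]

noncomputable def Dv (v : ℝ × ℝ) (f : ℝ × ℝ → A) : ℝ × ℝ → A := fun p => fderiv ℝ f p v

lemma Dv_contDiff {f : ℝ × ℝ → A} (hf : ContDiff ℝ (⊤ : ℕ∞) f) (v : ℝ × ℝ) :
    ContDiff ℝ (⊤ : ℕ∞) (Dv v f) := by
  have h1 : ContDiff ℝ (⊤ : ℕ∞) (fderiv ℝ f) := hf.fderiv_right (by simp)
  exact (ContinuousLinearMap.apply ℝ A v).contDiff.comp h1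

lemma px_eq {f : ℝ × ℝ → A} (hf : ContDiff ℝ (⊤ : ℕ∞) f) : px f = Dv (1, 0) f := by
  funext p
  have hg : HasFDerivAt (fun x : ℝ => (x, p.2)) (ContinuousLinearMap.inl ℝ ℝ ℝ) p.1 :=
    hasFDerivAt_prodMk_left p.1 p.2
  have h : HasFDerivAt (fun x : ℝ => f (x, p.2))
      ((fderiv ℝ f p).comp (ContinuousLinearMap.inl ℝ ℝ ℝ)) p.1 := by
    have := ((hf.differentiable (by simp) (p.1, p.2)).hasFDerivAt).comp p.1 hg
    exact this
  have h2 := h.hasDerivAt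
  simp only [px, Dv]
  rw [h2.deriv]
  simp

lemma pt_eq {f : ℝ × ℝ → A} (hf : ContDiff ℝ (⊤ : ℕ∞) f) : pt f = Dv (0, 1) f := by
  funext p
  have hg : HasFDerivAt (fun t : ℝ => (p.1, t)) (ContinuousLinearMap.inr ℝ ℝ ℝ) p.2 :=
    hasFDerivAt_prodMk_right p.1 p.2
  have h : HasFDerivAt (fun t : ℝ => f (p.1, t))
      ((fderiv ℝ f p).comp (ContinuousLinearMap.inr ℝ ℝ ℝ)) p.2 := by
    have := ((hf.differentiable (by simp) (p.1, p.2)).hasFDerivAt).comp p.2 hg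
    exact this
  have h2 := h.hasDerivAt
  simp only [pt, Dv]
  rw [h2.deriv]
  simp

lemma Dv_mulP {f g : ℝ × ℝ → A} {p : ℝ × ℝ} (hf : DifferentiableAt ℝ f p)
    (hg : DifferentiableAt ℝ g p) (v : ℝ × ℝ) :
    Dv v (fun q => f q * g q) p = f p * Dv v g p + Dv v f p * g p := by
  have h := (hf.hasFDerivAt.mul' hg.hasFDerivAt).fderiv
  simp only [Dv]
  rw [show (fun q => f q * g q) = f * g from rfl, h]
  simp [ContinuousLinearMap.add_apply, ContinuousLinearMap.smul_apply,
    ContinuousLinearMap.smulRight_apply, smul_eq_mul]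

lemma Dv_addP {f g : ℝ × ℝ → A} {p : ℝ × ℝ} (hf : DifferentiableAt ℝ f p)
    (hg : DifferentiableAt ℝ g p) (v : ℝ × ℝ) :
    Dv v (fun q => f q + g q) p = Dv v f p + Dv v g p := by
  simp only [Dv]
  rw [fderiv_fun_add hf hg]
  simp

lemma Dv_negP (f : ℝ × ℝ → A) (p : ℝ × ℝ) (v : ℝ × ℝ) :
    Dv v (fun q => -f q) p = -Dv v f p := by
  simp only [Dv]
  rw [fderiv_fun_neg]
  simp

lemma Dv_inv (Q : ℝ × ℝ → A) (hQ : ContDiff ℝ (⊤ : ℕ∞) Q) (hinv : ∀ p : ℝ × ℝ, IsUnit (Q p))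
    (v : ℝ × ℝ) :
    Dv v (fun q => Ring.inverse (Q q)) =
      fun p => -(Ring.inverse (Q p) * Dv v Q p * Ring.inverse (Q p)) := by
  funext p
  have hu := (hinv p).unit_spec
  have hri : ((hinv p).unit⁻¹ : Aˣ) = (Ring.inverse (Q p) : A) := by
    rw [← Ring.inverse_unit, hu]
  have h1 := hasFDerivAt_ringInverse (𝕜 := ℝ) (hinv p).unit
  rw [hu] at h1
  have h2 := (h1.comp p (hQ.differentiable (by simp) p).hasFDerivAt).fderiv
  simp only [Function.comp_def] at h2
  simp only [Dv]
  rw [h2]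
  simp [ContinuousLinearMap.comp_apply, ContinuousLinearMap.neg_apply,
    ContinuousLinearMap.mulLeftRight_apply, hri]

lemma contDiff_inv (Q : ℝ × ℝ → A) (hQ : ContDiff ℝ (⊤ : ℕ∞) Q)
    (hinv : ∀ p : ℝ × ℝ, IsUnit (Q p)) :
    ContDiff ℝ (⊤ : ℕ∞) (fun q => Ring.inverse (Q q)) := by
  rw [contDiff_iff_contDiffAt]
  intro p
  have h := contDiffAt_ringInverse (𝕜 := ℝ) (n := (⊤ : ℕ∞)) (hinv p).unit
  rw [(hinv p).unit_spec] at h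
  exact h.comp p hQ.contDiffAt

theorem stmt_2 (Q : ℝ × ℝ → A) (hQ : ContDiff ℝ (⊤ : ℕ∞) Q)
    (hinv : ∀ p : ℝ × ℝ, IsUnit (Q p)) :
    (∀ p : ℝ × ℝ, pt (Q) p = px (px (px (Q))) p - 3 * (px (px (Q)) p * Ring.inverse ((Q) p) * px (Q) p)) ↔
    (∀ p : ℝ × ℝ, pt (fun q => Ring.inverse (Q q)) p = px (px (px (fun q => Ring.inverse (Q q)))) p - 3 * (px (fun q => Ring.inverse (Q q)) p * Ring.inverse ((fun q => Ring.inverse (Q q)) p) * px (px (fun q => Ring.inverse (Q q))) p)) := by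
  set R : ℝ × ℝ → A := fun q => Ring.inverse (Q q) with hRdef
  set B : ℝ × ℝ → A := Dv (1, 0) Q with hBdef
  set C : ℝ × ℝ → A := Dv (1, 0) B with hCdef
  set D : ℝ × ℝ → A := Dv (1, 0) C with hDdef
  set E : ℝ × ℝ → A := Dv (0, 1) Q with hEdef
  have hRc : ContDiff ℝ (⊤ : ℕ∞) R := contDiff_inv Q hQ hinv
  have hB : ContDiff ℝ (⊤ : ℕ∞) B := Dv_contDiff hQ _
  have hC : ContDiff ℝ (⊤ : ℕ∞) C := Dv_contDiff hB _
  have hD : ContDiff ℝ (⊤ : ℕ∞) D := Dv_contDiff hC _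
  have hS1c : ContDiff ℝ (⊤ : ℕ∞) (fun p => -(R p * B p * R p)) := ((hRc.mul hB).mul hRc).neg
  have hS2c : ContDiff ℝ (⊤ : ℕ∞) (fun p =>
      -(R p * B p * -(R p * B p * R p) + (R p * C p + -(R p * B p * R p) * B p) * R p)) :=
    (((hRc.mul hB).mul hS1c).add (((hRc.mul hC).add (hS1c.mul hB)).mul hRc)).neg
  have dR : ∀ p, DifferentiableAt ℝ R p := fun p => (hRc.differentiable (by simp)) p
  have dB : ∀ p, DifferentiableAt ℝ B p := fun p => (hB.differentiable (by simp)) p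
  have dC : ∀ p, DifferentiableAt ℝ C p := fun p => (hC.differentiable (by simp)) p
  have dRB : ∀ p, DifferentiableAt ℝ (fun q => R q * B q) p :=
    fun p => ((hRc.mul hB).differentiable (by simp)) p
  have dRC : ∀ p, DifferentiableAt ℝ (fun q => R q * C q) p :=
    fun p => ((hRc.mul hC).differentiable (by simp)) p
  have dS1 : ∀ p, DifferentiableAt ℝ (fun q => -(R q * B q * R q)) p :=
    fun p => (hS1c.differentiable (by simp)) p
  have dS1B : ∀ p, DifferentiableAt ℝ (fun q => -(R q * B q * R q) * B q) p :=
    fun p => ((hS1c.mul hB).differentiable (by simp)) p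
  have dX : ∀ p, DifferentiableAt ℝ (fun q => R q * B q * -(R q * B q * R q)) p :=
    fun p => (((hRc.mul hB).mul hS1c).differentiable (by simp)) p
  have dIn : ∀ p, DifferentiableAt ℝ (fun q => R q * C q + -(R q * B q * R q) * B q) p :=
    fun p => (((hRc.mul hC).add (hS1c.mul hB)).differentiable (by simp)) p
  have dY : ∀ p, DifferentiableAt ℝ (fun q => (R q * C q + -(R q * B q * R q) * B q) * R q) p :=
    fun p => ((((hRc.mul hC).add (hS1c.mul hB)).mul hRc).differentiable (by simp)) p
  have hDR : Dv (1, 0) R = fun p => -(R p * B p * R p) := Dv_inv Q hQ hinv (1, 0)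
  have hDRt : Dv (0, 1) R = fun p => -(R p * E p * R p) := Dv_inv Q hQ hinv (0, 1)
  have hDRp : ∀ p, Dv (1, 0) R p = -(R p * B p * R p) := fun p => congrFun hDR p
  have hDBp : ∀ p, Dv (1, 0) B p = C p := fun p => rfl
  have hDCp : ∀ p, Dv (1, 0) C p = D p := fun p => rfl
  -- first derivative of R
  have hpx1 : px R = fun p => -(R p * B p * R p) := by rw [px_eq hRc, hDR]
  -- derivative of R*B
  have hDRB : ∀ p, Dv (1, 0) (fun q => R q * B q) p = R p * C p + -(R p * B p * R p) * B p := by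
    intro p
    rw [Dv_mulP (dR p) (dB p), hDBp, hDRp]
  -- second derivative of R
  have hpx2 : px (fun p => -(R p * B p * R p)) = fun p =>
      -(R p * B p * -(R p * B p * R p) + (R p * C p + -(R p * B p * R p) * B p) * R p) := by
    rw [px_eq hS1c]
    funext p
    rw [Dv_negP, Dv_mulP (dRB p) (dR p), hDRB, hDRp]
  have hDS1 : Dv (1, 0) (fun p => -(R p * B p * R p)) = fun p =>
      -(R p * B p * -(R p * B p * R p) + (R p * C p + -(R p * B p * R p) * B p) * R p) := by
    rw [← px_eq hS1c, hpx2]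
  have hDS1p := fun p => congrFun hDS1 p
  -- third derivative of R
  have hpx3 : px (fun p =>
      -(R p * B p * -(R p * B p * R p) + (R p * C p + -(R p * B p * R p) * B p) * R p)) =
      fun p =>
      -((R p * B p * -(R p * B p * -(R p * B p * R p) + (R p * C p + -(R p * B p * R p) * B p) * R p)
          + (R p * C p + -(R p * B p * R p) * B p) * -(R p * B p * R p))
        + ((R p * C p + -(R p * B p * R p) * B p) * -(R p * B p * R p)
          + ((R p * D p + -(R p * B p * R p) * C p)
             + (-(R p * B p * R p) * C p
                + -(R p * B p * -(R p * B p * R p) + (R p * C p + -(R p * B p * R p) * B p) * R p) * B p)) * R p)) := by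
    rw [px_eq hS2c]
    funext p
    rw [Dv_negP, Dv_addP (dX p) (dY p), Dv_mulP (dRB p) (dS1 p), Dv_mulP (dIn p) (dR p),
      Dv_addP (dRC p) (dS1B p), Dv_mulP (dR p) (dC p), Dv_mulP (dS1 p) (dB p),
      hDRB, hDRp, hDBp, hDCp, hDS1p]
  -- rewrite the statement
  rw [pt_eq hQ, ← hEdef, px_eq hQ, ← hBdef, px_eq hB, ← hCdef, px_eq hC, ← hDdef,
    pt_eq hRc, hDRt, hpx1, hpx2, hpx3]
  refine forall_congr' fun p => ?_
  simp only []
  have hRR : Ring.inverse (R p) = Q p := by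
    show Ring.inverse (Ring.inverse (Q p)) = Q p
    rw [← (hinv p).unit_spec, Ring.inverse_unit, Ring.inverse_unit, inv_inv]
  rw [hRR, show Ring.inverse (Q p) = R p from rfl]
  have h1 : Q p * R p = 1 := Ring.mul_inverse_cancel _ (hinv p)
  have h2 : R p * Q p = 1 := Ring.inverse_mul_cancel _ (hinv p)
  have m1 : ∀ x : A, Q p * (R p * x) = x := fun x => by rw [← mul_assoc, h1, one_mul]
  have m2 : ∀ x : A, R p * (Q p * x) = x := fun x => by rw [← mul_assoc, h2, one_mul]
  have hcan : ∀ x : A, Q p * (R p * x * R p) * Q p = x := fun x => by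
    calc Q p * (R p * x * R p) * Q p = Q p * R p * x * (R p * Q p) := by noncomm_ring
    _ = x := by rw [h1, h2, one_mul, mul_one]
  have hRHS :
      -((R p * B p * -(R p * B p * -(R p * B p * R p) + (R p * C p + -(R p * B p * R p) * B p) * R p)
          + (R p * C p + -(R p * B p * R p) * B p) * -(R p * B p * R p))
        + ((R p * C p + -(R p * B p * R p) * B p) * -(R p * B p * R p)
          + ((R p * D p + -(R p * B p * R p) * C p)
             + (-(R p * B p * R p) * C p
                + -(R p * B p * -(R p * B p * R p) + (R p * C p + -(R p * B p * R p) * B p) * R p) * B p)) * R p))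
      - 3 * (-(R p * B p * R p) * Q p *
          -(R p * B p * -(R p * B p * R p) + (R p * C p + -(R p * B p * R p) * B p) * R p)) =
      -(R p * (D p - 3 * (C p * R p * B p)) * R p) := by
    simp only [mul_assoc, neg_mul, mul_neg, neg_neg, mul_add, add_mul, mul_sub, sub_mul,
      m1, m2, h1, h2, one_mul, mul_one]
    noncomm_ring
  rw [hRHS]
  constructor
  · intro h; rw [h]
  · intro h
    have := neg_inj.mp h
    calc E p = Q p * (R p * E p * R p) * Q p := (hcan _).symm
      _ = Q p * (R p * (D p - 3 * (C p * R p * B p)) * R p) * Q p := by rw [this]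
      _ = D p - 3 * (C p * R p * B p) := hcan _
end

section
/- Let A be a unital Banach algebra and Q : ℝ × ℝ → A smooth and pointwise invertible, with Q̃ := Q⁻¹. Then Q (Q̃_xxx - 3 Q̃_xx Q̃⁻¹ Q̃_x) Q = -(Q_xxx - 3 Q_x Q⁻¹ Q_xx). -/
variable {A : Type*} [NormedRing A] [NormedAlgebra ℝ A] [CompleteSpace A]

section aux

lemma alg_core {R : Type*} [Ring R] (a b a1 a2 a3 b1 b2 b3 : R)
    (hab : a * b = 1) (hba : b * a = 1)
    (e1 : a1*b + a*b1 = 0)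
    (e2 : (a2*b + a1*b1) + (a1*b1 + a*b2) = 0)
    (e3 : ((a3*b + a2*b1) + (a2*b1 + a1*b2)) + ((a2*b1 + a1*b2) + (a1*b2 + a*b3)) = 0)
    :
    a * (b3 - 3*(b2*a*b1)) * a = -(a3 - 3*(a1*b*a2)) := by
  have H1 : ∀ x : R, a * (b * x) = x := fun x => by rw [← mul_assoc, hab, one_mul]
  have H2 : ∀ x : R, b * (a * x) = x := fun x => by rw [← mul_assoc, hba, one_mul]
  have hb1 : b1 = -(b*(a1*b)) := by
    have h : a * b1 = -(a1*b) := by linear_combination (norm := noncomm_ring) e1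
    calc b1 = b * (a * b1) := (H2 b1).symm
    _ = -(b*(a1*b)) := by rw [h, mul_neg]
  have hb2 : b2 = b*(a1*(b*(a1*b))) + b*(a1*(b*(a1*b))) - b*(a2*b) := by
    have h : a * b2 = -(a2*b) - a1*b1 - a1*b1 := by linear_combination (norm := noncomm_ring) e2
    calc b2 = b * (a * b2) := (H2 b2).symm
    _ = _ := by rw [h, hb1]; noncomm_ring
  have hb3 : b3 = b*(-(a3*b) - (a2*b1 + a2*b1 + a2*b1) - (a1*b2 + a1*b2 + a1*b2)) := by
    have h : a * b3 = -(a3*b) - (a2*b1 + a2*b1 + a2*b1) - (a1*b2 + a1*b2 + a1*b2) := by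
      linear_combination (norm := noncomm_ring) e3
    rw [← h]; exact (H2 b3).symm
  rw [hb3, hb2, hb1]
  simp only [show (3:R) = 1+1+1 from by norm_num, add_mul, one_mul, mul_add, mul_sub, sub_mul,
    mul_neg, neg_mul, mul_assoc, H1, H2, hab, hba, mul_one, neg_neg, neg_add, sub_eq_add_neg]
  abel
open scoped ContDiff


lemma key (f : ℝ → A) (hf : ContDiff ℝ ∞ f) (hu : ∀ x, IsUnit (f x)) (x : ℝ) :
    f x * (deriv (deriv (deriv (fun y => Ring.inverse (f y)))) x
        - 3 * (deriv (deriv (fun y => Ring.inverse (f y))) x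
                * Ring.inverse (Ring.inverse (f x))
                * deriv (fun y => Ring.inverse (f y)) x)) * f x
      = -(deriv (deriv (deriv f)) x - 3 * (deriv f x * Ring.inverse (f x) * deriv (deriv f) x)) := by
  set g : ℝ → A := fun y => Ring.inverse (f y) with hgdef
  have hg : ContDiff ℝ ∞ g := by
    rw [contDiff_iff_contDiffAt]
    intro y
    have h1 : ContDiffAt ℝ ∞ Ring.inverse (f y) := by
      have := contDiffAt_ringInverse ℝ (n := ∞) (hu y).unit
      rwa [(hu y).unit_spec] at this
    exact h1.comp y hf.contDiffAt
  have hf1 : ContDiff ℝ ∞ (deriv f) := (contDiff_infty_iff_deriv.mp hf).2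
  have hf2 : ContDiff ℝ ∞ (deriv (deriv f)) := (contDiff_infty_iff_deriv.mp hf1).2
  have hg1 : ContDiff ℝ ∞ (deriv g) := (contDiff_infty_iff_deriv.mp hg).2
  have hg2 : ContDiff ℝ ∞ (deriv (deriv g)) := (contDiff_infty_iff_deriv.mp hg1).2
  have Df : Differentiable ℝ f := hf.differentiable (by simp)
  have Df1 : Differentiable ℝ (deriv f) := hf1.differentiable (by simp)
  have Df2 : Differentiable ℝ (deriv (deriv f)) := hf2.differentiable (by simp)
  have Dg : Differentiable ℝ g := hg.differentiable (by simp)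
  have Dg1 : Differentiable ℝ (deriv g) := hg1.differentiable (by simp)
  have Dg2 : Differentiable ℝ (deriv (deriv g)) := hg2.differentiable (by simp)
  -- first derivative of f*g = 1
  have e1 : ∀ y, deriv f y * g y + f y * deriv g y = 0 := by
    intro y
    have : deriv (fun z => f z * g z) y = 0 := by
      have : (fun z => f z * g z) = fun _ => (1:A) :=
        funext fun z => Ring.mul_inverse_cancel _ (hu z)
      rw [this, deriv_const]
    rwa [deriv_fun_mul (Df y) (Dg y)] at this
  have e2 : ∀ y, (deriv (deriv f) y * g y + deriv f y * deriv g y)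
      + (deriv f y * deriv g y + f y * deriv (deriv g) y) = 0 := by
    intro y
    have h0 : deriv (fun z => deriv f z * g z + f z * deriv g z) y = 0 := by
      have : (fun z => deriv f z * g z + f z * deriv g z) = fun _ => (0:A) :=
        funext fun z => e1 z
      rw [this, deriv_const]
    rwa [deriv_fun_add ((Df1 y).fun_mul (Dg y)) ((Df y).fun_mul (Dg1 y)),
      deriv_fun_mul (Df1 y) (Dg y), deriv_fun_mul (Df y) (Dg1 y)] at h0
  have e3 : ∀ y, ((deriv (deriv (deriv f)) y * g y + deriv (deriv f) y * deriv g y)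
        + (deriv (deriv f) y * deriv g y + deriv f y * deriv (deriv g) y))
      + ((deriv (deriv f) y * deriv g y + deriv f y * deriv (deriv g) y)
        + (deriv f y * deriv (deriv g) y + f y * deriv (deriv (deriv g)) y)) = 0 := by
    intro y
    have h0 : deriv (fun z => (deriv (deriv f) z * g z + deriv f z * deriv g z)
        + (deriv f z * deriv g z + f z * deriv (deriv g) z)) y = 0 := by
      have : (fun z => (deriv (deriv f) z * g z + deriv f z * deriv g z)
          + (deriv f z * deriv g z + f z * deriv (deriv g) z)) = fun _ => (0:A) :=
        funext fun z => e2 z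
      rw [this, deriv_const]
    rwa [deriv_fun_add (((Df2 y).fun_mul (Dg y)).fun_add ((Df1 y).fun_mul (Dg1 y)))
        (((Df1 y).fun_mul (Dg1 y)).fun_add ((Df y).fun_mul (Dg2 y))),
      deriv_fun_add ((Df2 y).fun_mul (Dg y)) ((Df1 y).fun_mul (Dg1 y)),
      deriv_fun_add ((Df1 y).fun_mul (Dg1 y)) ((Df y).fun_mul (Dg2 y)),
      deriv_fun_mul (Df2 y) (Dg y), deriv_fun_mul (Df1 y) (Dg1 y),
      deriv_fun_mul (Df y) (Dg2 y)] at h0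
  have hinvinv : Ring.inverse (Ring.inverse (f x)) = f x := by
    rw [(hu x).unit_spec.symm, Ring.inverse_unit, Ring.inverse_unit, inv_inv]
  have hab : f x * g x = 1 := Ring.mul_inverse_cancel _ (hu x)
  have hba : g x * f x = 1 := Ring.inverse_mul_cancel _ (hu x)
  rw [hinvinv]
  exact alg_core (f x) (g x) (deriv f x) (deriv (deriv f) x) (deriv (deriv (deriv f)) x)
    (deriv g x) (deriv (deriv g) x) (deriv (deriv (deriv g)) x) hab hba (e1 x) (e2 x) (e3 x)

end aux

theorem stmt_5 (Q : ℝ × ℝ → A) (hQ : ContDiff ℝ (⊤ : ℕ∞) Q)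
    (hinv : ∀ p : ℝ × ℝ, IsUnit (Q p)) :
    ∀ p : ℝ × ℝ,
      Q p * (px (px (px (fun q => Ring.inverse (Q q)))) p
              - 3 * (px (px (fun q => Ring.inverse (Q q))) p
                      * Ring.inverse (Ring.inverse (Q p))
                      * px (fun q => Ring.inverse (Q q)) p)) * Q p
        = -(px (px (px Q)) p - 3 * (px Q p * Ring.inverse (Q p) * px (px Q) p)) := by
  intro p
  have hf : ContDiff ℝ (⊤ : ℕ∞) (fun x : ℝ => Q (x, p.2)) :=
    (hQ.of_le (by simp)).comp (contDiff_id.prodMk contDiff_const)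
  have := key (fun x : ℝ => Q (x, p.2)) hf (fun x => hinv (x, p.2)) p.1
  simp only [px]
  convert this using 2
end

section
/- Let A be a unital Banach algebra, A₀, B ∈ A with A₀ invertible, and set L(x,t) = exp(A₀ x + A₀³ t) B. On the open set Ω where both I + L and I - L are invertible, the function Q̃ := (I + L)⁻¹ A₀ (I - L) satisfies Q̃_xx = Q̃ Q̃_x. -/
/-!
Along a line `t = const`, `L` solves the linear equation `L_x = A₀ L`. For `u = (I + L)⁻¹`
this gives the Riccati equation `u_x = u A₀ u - u A₀`, hence
`Q̃_x = u A₀ (Q̃ - A₀)`. Differentiating once more, both sides of `Q̃_xx = Q̃ Q̃_x` reduce to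
`u A₀ (2u - I) A₀ (Q̃ - A₀)`, because `(I - L) u = 2u - I`.
-/

variable {A : Type*} [NormedRing A] [NormedAlgebra ℝ A] [CompleteSpace A]

open NormedSpace Filter Topology
open scoped Ring

theorem one_sub_mul_ringInverse_one_add {R : Type*} [Ring R] {l : R} (hl : IsUnit (1 + l)) :
    (1 - l) * (1 + l)⁻¹ʳ = 2 * (1 + l)⁻¹ʳ - 1 := by
  rw [show 1 - l = 2 - (1 + l) by rw [← one_add_one_eq_two]; abel, sub_mul,
    Ring.mul_inverse_cancel _ hl]

section Calculus

variable {𝕜 R : Type*} [NontriviallyNormedField 𝕜] [NormedRing R] [NormedAlgebra 𝕜 R]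
  [HasSummableGeomSeries R]

theorem HasDerivAt.ringInverse {f : 𝕜 → R} {f' : R} {x : 𝕜} (hf : HasDerivAt f f' x)
    (hx : IsUnit (f x)) : HasDerivAt (fun y => (f y)⁻¹ʳ) (-((f x)⁻¹ʳ * f' * (f x)⁻¹ʳ)) x := by
  obtain ⟨u, hu⟩ := hx
  have hinv : HasFDerivAt Ring.inverse _ (f x) := hu ▸ hasFDerivAt_ringInverse (𝕜 := 𝕜) u
  rw [← hu, Ring.inverse_unit]
  exact hinv.comp_hasDerivAt x hf

theorem deriv_deriv_ringInverse_one_add_mul_one_sub {l : 𝕜 → R} {a : R}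
    (hl : ∀ x, HasDerivAt l (a * l x) x) {x₀ : 𝕜} (h₀ : IsUnit (1 + l x₀)) :
    deriv (deriv fun x => (1 + l x)⁻¹ʳ * a * (1 - l x)) x₀ =
      (1 + l x₀)⁻¹ʳ * a * (1 - l x₀) * deriv (fun x => (1 + l x)⁻¹ʳ * a * (1 - l x)) x₀ := by
  set u : 𝕜 → R := fun x => (1 + l x)⁻¹ʳ
  set q : 𝕜 → R := fun x => u x * a * (1 - l x)
  have hu : ∀ x, IsUnit (1 + l x) → HasDerivAt u (u x * a * u x - u x * a) x := by
    intro x hx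
    convert ((hl x).const_add 1).ringInverse hx using 1
    rw [show a * l x = a * (1 + l x) - a by noncomm_ring]
    simp only [mul_sub, sub_mul, mul_assoc, Ring.mul_inverse_cancel _ hx, u]
    noncomm_ring
  have hq : ∀ x, IsUnit (1 + l x) → HasDerivAt q (u x * a * (q x - a)) x := by
    intro x hx
    convert ((hu x hx).mul_const a).mul ((hl x).const_sub 1) using 1
    · funext y; simp only [q, Pi.mul_apply]
    · simp only [q]; noncomm_ring
  have hunits : ∀ᶠ x in 𝓝 x₀, IsUnit (1 + l x) :=
    (continuous_iff_continuousAt.2 fun x => (hl x).continuousAt).const_add 1 |>.continuousAt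
      |>.eventually (Units.isOpen.mem_nhds h₀)
  have hdq : deriv q =ᶠ[𝓝 x₀] fun x => u x * a * (q x - a) :=
    hunits.mono fun x hx => (hq x hx).deriv
  have key : (1 - l x₀) * u x₀ = 2 * u x₀ - 1 := one_sub_mul_ringInverse_one_add h₀
  change deriv (deriv q) x₀ = q x₀ * deriv q x₀
  have hq' : HasDerivAt (fun x => u x * a * (q x - a))
      ((u x₀ * a * u x₀ - u x₀ * a) * a * (q x₀ - a) + u x₀ * a * (u x₀ * a * (q x₀ - a))) x₀ :=
    ((hu x₀ h₀).mul_const a).mul ((hq x₀ h₀).sub_const a)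
  rw [hdq.deriv_eq, (hq x₀ h₀).deriv, hq'.deriv]
  calc _ = u x₀ * a * (2 * u x₀ - 1) * a * (q x₀ - a) := by noncomm_ring
    _ = q x₀ * (u x₀ * a * (q x₀ - a)) := by rw [← key]; simp only [q, mul_assoc]

end Calculus

theorem hasDerivAt_exp_smul_add_mul {𝕂 𝔸 : Type*} [RCLike 𝕂] [NormedRing 𝔸] [NormedAlgebra 𝕂 𝔸]
    [CompleteSpace 𝔸] {a c : 𝔸} (hac : Commute a c) (b : 𝔸) (t : 𝕂) :
    HasDerivAt (fun s : 𝕂 => exp (s • a + c) * b) (a * (exp (t • a + c) * b)) t := by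
  have hexp : ∀ s : 𝕂, exp (s • a + c) = exp (s • a) * exp c := fun s =>
    exp_add_of_commute_of_mem_ball (𝕂 := 𝕂) (hac.smul_left s)
      (by simp [expSeries_radius_eq_top]) (by simp [expSeries_radius_eq_top])
  simpa only [hexp, mul_assoc] using
    (hasDerivAt_exp_smul_const' (𝕂 := 𝕂) a t).mul_const (exp c * b)

theorem stmt_6_general (A₀ B : A)
    (L : ℝ × ℝ → A) (hL : L = fun p : ℝ × ℝ => NormedSpace.exp (p.1 • A₀ + p.2 • A₀ ^ 3) * B)
    (Qt : ℝ × ℝ → A) (hQt : Qt = fun p => Ring.inverse (1 + L p) * A₀ * (1 - L p)) :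
    ∀ p : ℝ × ℝ, IsUnit (1 + L p) → IsUnit (1 - L p) →
      px (px Qt) p = Qt p * px Qt p := by
  rintro ⟨x, t⟩ hunit -
  subst hL hQt
  exact deriv_deriv_ringInverse_one_add_mul_one_sub
    (hasDerivAt_exp_smul_add_mul (((Commute.refl A₀).pow_right 3).smul_right t) B) hunit

theorem stmt_6 (A₀ B : A) (hA : IsUnit A₀)
    (L : ℝ × ℝ → A) (hL : L = fun p : ℝ × ℝ => NormedSpace.exp (p.1 • A₀ + p.2 • A₀ ^ 3) * B)
    (Qt : ℝ × ℝ → A) (hQt : Qt = fun p => Ring.inverse (1 + L p) * A₀ * (1 - L p)) :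
    ∀ p : ℝ × ℝ, IsUnit (1 + L p) → IsUnit (1 - L p) →
      px (px Qt) p = Qt p * px Qt p :=
  stmt_6_general A₀ B L hL Qt hQt
end

section
/- Let A be a unital Banach algebra, A₀, B ∈ A with A₀ invertible, and L(x,t) = exp(A₀ x + A₀³ t) B. On the set where I ± L are invertible, V := (I - L²)⁻¹ (A₀ L + L A₀) satisfies the noncommutative mKdV equation V_t = V_xxx - 3 (V² V_x + V_x V²). -/
/-!
Along a line in the `x`- or `t`-direction, `ℓ = L` solves `ℓ' = b ℓ` with `b = A₀` resp.
`b = A₀ ^ 3`, and `b` commutes with `A₀`. For `R = (1 - ℓ²)⁻¹` this gives `R' = V_b ℓ R`, where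
`V_b` is `V` with `A₀` replaced by `b`, and `(A₀ ℓ + ℓ A₀)' = b (A₀ ℓ + ℓ A₀)`; hence
`V' = V_b ℓ V + R b (A₀ ℓ + ℓ A₀)`. Iterating, `V_t`, `V_x`, `V_xx`, `V_xxx` are noncommutative
polynomials in `A₀`, `ℓ` and `R`, and modulo `R ℓ = ℓ R` and `ℓ² R = R - 1` the mKdV equation
becomes a polynomial identity.
-/

variable {A : Type*} [NormedRing A] [NormedAlgebra ℝ A] [CompleteSpace A]

namespace MKdV

section Algebra

variable {R : Type*} [Ring R]

-- `res l`, `acomm a l` and `pot a l` are `(I - L²)⁻¹`, `A₀ L + L A₀` and `V` at `A₀ = a`, `L = l`.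
noncomputable def res (l : R) : R := Ring.inverse (1 - l * l)

def acomm (a l : R) : R := a * l + l * a

noncomputable def pot (a l : R) : R := res l * acomm a l

-- The derivative of `pot a ∘ ℓ` along `ℓ' = b ℓ`, for `b` commuting with `a`.
noncomputable def potFlow (b a l : R) : R := pot b l * l * pot a l + res l * (b * acomm a l)

noncomputable def pot₁ (a l : R) : R := potFlow a a l

-- `pot₂` and `pot₃` are the product rule applied termwise to `pot₁` and `pot₂`, with `ℓ' = a ℓ`,
-- `pot' = pot₁` and `res' = pot ℓ res`.
noncomputable def pot₂ (a l : R) : R :=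
  pot₁ a l * l * pot a l + pot a l * (a * l) * pot a l + pot a l * l * pot₁ a l +
    pot a l * l * res l * (a * acomm a l) + res l * (a * (a * acomm a l))

noncomputable def pot₃ (a l : R) : R :=
  (pot₂ a l * l * pot a l + pot₁ a l * (a * l) * pot a l + pot₁ a l * l * pot₁ a l) +
    (pot₁ a l * (a * l) * pot a l + pot a l * (a * (a * l)) * pot a l +
      pot a l * (a * l) * pot₁ a l) +
    (pot₁ a l * l * pot₁ a l + pot a l * (a * l) * pot₁ a l + pot a l * l * pot₂ a l) +
    (pot₁ a l * l * res l * (a * acomm a l) + pot a l * (a * l) * res l * (a * acomm a l) +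
      pot a l * l * (pot a l * l * res l) * (a * acomm a l) +
      pot a l * l * res l * (a * (a * acomm a l))) +
    (pot a l * l * res l * (a * (a * acomm a l)) + res l * (a * (a * (a * acomm a l))))

theorem commute_res_self (l : R) : Commute (res l) l := by
  by_cases hl : IsUnit (1 - l * l)
  · have h : Commute (↑hl.unit : R) l := by
      rw [hl.unit_spec]
      exact (Commute.one_left l).sub_left ((Commute.refl l).mul_left (Commute.refl l))
    rw [res, ← hl.unit_spec, Ring.inverse_unit]
    exact h.units_inv_left
  · simp [res, Ring.inverse_non_unit _ hl]

theorem mul_self_mul_res {l : R} (hl : IsUnit (1 - l * l)) : l * l * res l = res l - 1 := by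
  have h : (1 - l * l) * res l = 1 := Ring.mul_inverse_cancel _ hl
  calc l * l * res l = res l - (1 - l * l) * res l := by noncomm_ring
    _ = res l - 1 := by rw [h]

theorem potFlow_pow_three_eq (a l : R) (hl : IsUnit (1 - l * l)) :
    potFlow (a ^ 3) a l =
      pot₃ a l - 3 * (pot a l * pot a l * pot₁ a l + pot₁ a l * (pot a l * pot a l)) := by
  -- Moving every `res l` to the right of the `l`s and cancelling `l * l * res l` leaves an
  -- identity of noncommutative polynomials.
  have hcomm : ∀ y : R, res l * (l * y) = l * (res l * y) := fun y => by
    rw [← mul_assoc, (commute_res_self l).eq, mul_assoc]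
  have hcancel : ∀ y : R, l * (l * (res l * y)) = res l * y - y := fun y => by
    rw [← mul_assoc, ← mul_assoc, mul_self_mul_res hl, sub_mul, one_mul]
  simp only [pot₃, pot₂, pot₁, potFlow, pot, acomm, pow_succ, pow_zero, one_mul, mul_add, add_mul,
    mul_sub, sub_mul, mul_assoc, hcomm, hcancel]
  noncomm_ring

end Algebra

section Derivatives

variable {E : Type*} [NormedRing E] [NormedAlgebra ℝ E] {a b : E} {ℓ : ℝ → E} {x : ℝ}

theorem hasDerivAt_acomm (hab : Commute a b) (hℓ : HasDerivAt ℓ (b * ℓ x) x) :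
    HasDerivAt (fun y => acomm a (ℓ y)) (b * acomm a (ℓ x)) x := by
  refine ((hℓ.const_mul a).add (hℓ.mul_const a)).congr_deriv ?_
  simp only [acomm, mul_add, ← mul_assoc, hab.eq]

variable [CompleteSpace E]

theorem hasDerivAt_res (hℓ : HasDerivAt ℓ (b * ℓ x) x) (hu : IsUnit (1 - ℓ x * ℓ x)) :
    HasDerivAt (fun y => res (ℓ y)) (pot b (ℓ x) * ℓ x * res (ℓ x)) x := by
  have hinv := hasFDerivAt_ringInverse (𝕜 := ℝ) hu.unit
  rw [hu.unit_spec] at hinv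
  have hres : (↑hu.unit⁻¹ : E) = res (ℓ x) := by
    rw [res, ← Ring.inverse_unit, hu.unit_spec]
  refine (hinv.comp_hasDerivAt x ((hasDerivAt_const x (1 : E)).sub (hℓ.mul hℓ))).congr_deriv ?_
  simp only [neg_apply, ContinuousLinearMap.mulLeftRight_apply, hres, pot, acomm]
  noncomm_ring

theorem hasDerivAt_pot (hab : Commute a b) (hℓ : HasDerivAt ℓ (b * ℓ x) x)
    (hu : IsUnit (1 - ℓ x * ℓ x)) :
    HasDerivAt (fun y => pot a (ℓ y)) (potFlow b a (ℓ x)) x := by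
  refine ((hasDerivAt_res hℓ hu).mul (hasDerivAt_acomm hab hℓ)).congr_deriv ?_
  simp only [potFlow, pot, mul_assoc]

theorem hasDerivAt_pot₁ (hℓ : HasDerivAt ℓ (a * ℓ x) x) (hu : IsUnit (1 - ℓ x * ℓ x)) :
    HasDerivAt (fun y => pot₁ a (ℓ y)) (pot₂ a (ℓ x)) x := by
  have hp := hasDerivAt_pot (Commute.refl a) hℓ hu
  have hr := hasDerivAt_res hℓ hu
  have hm := hasDerivAt_acomm (Commute.refl a) hℓ
  refine (((hp.mul hℓ).mul hp).add (hr.mul (hm.const_mul a))).congr_deriv ?_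
  simp only [pot₂, pot₁, Pi.mul_apply]
  noncomm_ring

theorem hasDerivAt_pot₂ (hℓ : HasDerivAt ℓ (a * ℓ x) x) (hu : IsUnit (1 - ℓ x * ℓ x)) :
    HasDerivAt (fun y => pot₂ a (ℓ y)) (pot₃ a (ℓ x)) x := by
  have hp := hasDerivAt_pot (Commute.refl a) hℓ hu
  have hp₁ := hasDerivAt_pot₁ hℓ hu
  have hr := hasDerivAt_res hℓ hu
  have hm := (hasDerivAt_acomm (Commute.refl a) hℓ).const_mul a
  refine (((((hp₁.mul hℓ).mul hp).add ((hp.mul (hℓ.const_mul a)).mul hp)).add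
    ((hp.mul hℓ).mul hp₁)).add (((hp.mul hℓ).mul hr).mul hm) |>.add
      (hr.mul (hm.const_mul a))).congr_deriv ?_
  simp only [pot₃, pot₁, Pi.mul_apply]
  noncomm_ring

end Derivatives

end MKdV

section ExponentialSolution

variable {E : Type*} [NormedRing E] [NormedAlgebra ℝ E] [CompleteSpace E]

theorem hasDerivAt_exp_smul_add_mul_s10 {a c : E} (h : Commute a c) (B : E) (s : ℝ) :
    HasDerivAt (fun s : ℝ => NormedSpace.exp (s • a + c) * B)
      (a * (NormedSpace.exp (s • a + c) * B)) s := by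
  have hball : ∀ y : E, y ∈ Metric.eball (0 : E) (NormedSpace.expSeries ℝ E).radius := fun y => by
    simp [NormedSpace.expSeries_radius_eq_top]
  have hsplit : ∀ s : ℝ, NormedSpace.exp (s • a + c) * B =
      NormedSpace.exp (s • a) * (NormedSpace.exp c * B) := fun s => by
    rw [NormedSpace.exp_add_of_commute_of_mem_ball (h.smul_left s) (hball _) (hball _), mul_assoc]
  simp only [hsplit]
  exact ((hasDerivAt_exp_smul_const' a s).mul_const _).congr_deriv (mul_assoc _ _ _)

theorem hasDerivAt_exp_smul_add_smul_mul_fst {a b : E} (h : Commute a b) (B : E) (q : ℝ × ℝ) :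
    HasDerivAt (fun x : ℝ => NormedSpace.exp (x • a + q.2 • b) * B)
      (a * (NormedSpace.exp (q.1 • a + q.2 • b) * B)) q.1 :=
  hasDerivAt_exp_smul_add_mul_s10 (h.smul_right q.2) B q.1

theorem hasDerivAt_exp_smul_add_smul_mul_snd {a b : E} (h : Commute a b) (B : E) (q : ℝ × ℝ) :
    HasDerivAt (fun t : ℝ => NormedSpace.exp (q.1 • a + t • b) * B)
      (b * (NormedSpace.exp (q.1 • a + q.2 • b) * B)) q.2 := by
  simpa only [add_comm] using hasDerivAt_exp_smul_add_mul_s10 (h.symm.smul_right q.1) B q.2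

theorem continuous_exp_smul_add_smul_mul (a b B : E) :
    Continuous fun q : ℝ × ℝ => NormedSpace.exp (q.1 • a + q.2 • b) * B := by
  have hexp : Continuous (NormedSpace.exp : E → E) := continuous_iff_continuousAt.2
    fun z => (NormedSpace.exp_analytic (𝕂 := ℝ) z).continuousAt
  exact (hexp.comp (by fun_prop)).mul continuous_const

end ExponentialSolution

theorem Set.EqOn.px {E : Type*} [NormedRing E] [NormedAlgebra ℝ E] {F G : ℝ × ℝ → E}
    {U : Set (ℝ × ℝ)} (hU : IsOpen U) (h : EqOn F G U) : EqOn (px F) (px G) U := by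
  intro q hq
  have hslice : IsOpen {x : ℝ | (x, q.2) ∈ U} := hU.preimage (by fun_prop)
  exact Filter.EventuallyEq.deriv_eq (Filter.eventually_of_mem (hslice.mem_nhds hq)
    fun x hx => h hx)

open MKdV in
theorem stmt_10_general (A₀ B : A)
    (L : ℝ × ℝ → A) (hL : L = fun p : ℝ × ℝ => NormedSpace.exp (p.1 • A₀ + p.2 • A₀ ^ 3) * B) :
    ∀ p : ℝ × ℝ, IsUnit (1 + L p) → IsUnit (1 - L p) →
      pt (fun q => Ring.inverse (1 - L q * L q) * (A₀ * L q + L q * A₀)) p = px (px (px (fun q => Ring.inverse (1 - L q * L q) * (A₀ * L q + L q * A₀)))) p - 3 * ((fun q => Ring.inverse (1 - L q * L q) * (A₀ * L q + L q * A₀)) p * (fun q => Ring.inverse (1 - L q * L q) * (A₀ * L q + L q * A₀)) p * px (fun q => Ring.inverse (1 - L q * L q) * (A₀ * L q + L q * A₀)) p + px (fun q => Ring.inverse (1 - L q * L q) * (A₀ * L q + L q * A₀)) p * ((fun q => Ring.inverse (1 - L q * L q) * (A₀ * L q + L q * A₀)) p * (fun q => Ring.inverse (1 - L q * L q) * (A₀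 * L q + L q * A₀)) p)) := by
  intro p hadd hsub
  have hu : IsUnit (1 - L p * L p) := by
    rw [show 1 - L p * L p = (1 - L p) * (1 + L p) by noncomm_ring]
    exact hsub.mul hadd
  have hcomm : Commute A₀ (A₀ ^ 3) := (Commute.refl A₀).pow_right 3
  have hLx : ∀ q, HasDerivAt (fun x => L (x, q.2)) (A₀ * L q) q.1 := fun q => by
    subst hL; exact hasDerivAt_exp_smul_add_smul_mul_fst hcomm B q
  have hLt : ∀ q, HasDerivAt (fun t => L (q.1, t)) (A₀ ^ 3 * L q) q.2 := fun q => by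
    subst hL; exact hasDerivAt_exp_smul_add_smul_mul_snd hcomm B q
  have hLc : Continuous L := hL ▸ continuous_exp_smul_add_smul_mul A₀ (A₀ ^ 3) B
  set U := {q : ℝ × ℝ | IsUnit (1 - L q * L q)}
  have hU : IsOpen U := Units.isOpen.preimage (continuous_const.sub (hLc.mul hLc))
  have h₁ : Set.EqOn (px (pot A₀ ∘ L)) (pot₁ A₀ ∘ L) U := fun q hq =>
    (hasDerivAt_pot (Commute.refl A₀) (hLx q) hq).deriv
  have h₂ : Set.EqOn (px (px (pot A₀ ∘ L))) (pot₂ A₀ ∘ L) U := fun q hq =>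
    (h₁.px hU hq).trans (hasDerivAt_pot₁ (hLx q) hq).deriv
  have h₃ : Set.EqOn (px (px (px (pot A₀ ∘ L)))) (pot₃ A₀ ∘ L) U := fun q hq =>
    (h₂.px hU hq).trans (hasDerivAt_pot₂ (hLx q) hq).deriv
  have hₜ : pt (pot A₀ ∘ L) p = potFlow (A₀ ^ 3) A₀ (L p) :=
    (hasDerivAt_pot hcomm (hLt p) hu).deriv
  change pt (pot A₀ ∘ L) p = px (px (px (pot A₀ ∘ L))) p -
    3 * (pot A₀ (L p) * pot A₀ (L p) * px (pot A₀ ∘ L) p +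
      px (pot A₀ ∘ L) p * (pot A₀ (L p) * pot A₀ (L p)))
  rw [hₜ, h₃ hu, h₁ hu]
  exact potFlow_pow_three_eq A₀ (L p) hu

theorem stmt_10 (A₀ B : A) (hA : IsUnit A₀)
    (L : ℝ × ℝ → A) (hL : L = fun p : ℝ × ℝ => NormedSpace.exp (p.1 • A₀ + p.2 • A₀ ^ 3) * B) :
    ∀ p : ℝ × ℝ, IsUnit (1 + L p) → IsUnit (1 - L p) →
      pt (fun q => Ring.inverse (1 - L q * L q) * (A₀ * L q + L q * A₀)) p = px (px (px (fun q => Ring.inverse (1 - L q * L q) * (A₀ * L q + L q * A₀)))) p - 3 * ((fun q => Ring.inverse (1 - L q * L q) * (A₀ * L q + L q * A₀)) p * (fun q => Ring.inverse (1 - L q * L q) * (A₀ * L q + L q * A₀)) p * px (fun q => Ring.inverse (1 - L q * L q) * (A₀ * L q + L q * A₀)) p + px (fun q => Ring.inverse (1 - L q * L q) * (A₀ * L q + L q * A₀)) p * ((fun q => Ring.inverse (1 - L q * L q) * (A₀ * L q + L q * A₀)) p * (fun q => Ring.inverse (1 - L q * L q) * (A₀ * L q + L q * A₀)) p)) :=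
  stmt_10_general A₀ B L hL
end
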